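/- Let M be a left O-module over the octonions. For any m ∈ M, the left submodule generated by m has real dimension at most 128. -/

import Mathlib

noncomputable section

open scoped Quaternion

/-- The octonions, built from pairs of quaternions via the Cayley–Dickson construction. -/
def Octonion : Type := ℍ[ℝ] × ℍ[ℝ]

namespace Octonion

def mk' (a b : ℍ[ℝ]) : Octonion := Prod.mk a b
def q1 (x : Octonion) : ℍ[ℝ] := Prod.fst x
def q2 (x : Octonion) : ℍ[ℝ] := Prod.snd x

instance : AddCommGroup Octonion := inferInstanceAs (AddCommGroup (ℍ[ℝ] × ℍ[ℝ]))
instance : Module ℝ Octonion := inferInstanceAs (Module ℝ (ℍ[ℝ] × ℍ[ℝ]))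
instance : One Octonion := ⟨mk' 1 0⟩
instance : Mul Octonion :=
  ⟨fun x y => mk' (q1 x * q1 y - star (q2 y) * q2 x) (q2 y * q1 x + q2 x * star (q1 y))⟩

/-- Octonion conjugation. -/
def conj (x : Octonion) : Octonion := mk' (star (q1 x)) (-(q2 x))

/-- The real part of an octonion. -/
def re (x : Octonion) : ℝ := (q1 x).re

/-- The standard basis `e 0 = 1, e 1, …, e 7` of the octonions. -/
def e : Fin 8 → Octonion :=
  ![mk' 1 0, mk' ⟨0,1,0,0⟩ 0, mk' ⟨0,0,1,0⟩ 0, mk' ⟨0,0,0,1⟩ 0,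
    mk' 0 1, mk' 0 ⟨0,1,0,0⟩, mk' 0 ⟨0,0,1,0⟩, mk' 0 ⟨0,0,0,1⟩]

/-- The coordinates of an octonion with respect to the standard basis. -/
def coord (x : Octonion) : Fin 8 → ℝ :=
  ![(q1 x).re, (q1 x).imI, (q1 x).imJ, (q1 x).imK,
    (q2 x).re, (q2 x).imI, (q2 x).imJ, (q2 x).imK]

end Octonion

/-!
The imaginary units act on `M` through `Tᵢ = L eᵢ` (`i = 1, …, 7`) with `Tᵢ² = -1`, and
polarizing the left alternative law gives `TᵢTⱼ = -TⱼTᵢ` for `i ≠ j`. So `T j` applied to an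
ordered word `T_{i₁} ⋯ T_{i_k} m` (`i₁ < ⋯ < i_k`) is, up to a scalar, again an ordered word:
`j` is inserted or cancelled after anticommuting past the smaller letters. The `2⁷ = 128`
ordered words in `m` therefore span a subspace that contains `m` and is stable under every
`L a`, hence contains the submodule generated by `m`.
-/

namespace Octonion

theorem ext {x y : Octonion} (h1 : q1 x = q1 y) (h2 : q2 x = q2 y) : x = y := Prod.ext h1 h2

@[simp] theorem q1_one : q1 1 = 1 := rfl
@[simp] theorem q2_one : q2 1 = 0 := rfl
@[simp] theorem q1_add (x y : Octonion) : q1 (x + y) = q1 x + q1 y := rfl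
@[simp] theorem q2_add (x y : Octonion) : q2 (x + y) = q2 x + q2 y := rfl
@[simp] theorem q1_neg (x : Octonion) : q1 (-x) = -q1 x := rfl
@[simp] theorem q2_neg (x : Octonion) : q2 (-x) = -q2 x := rfl
@[simp] theorem q1_smul (c : ℝ) (x : Octonion) : q1 (c • x) = c • q1 x := rfl
@[simp] theorem q2_smul (c : ℝ) (x : Octonion) : q2 (c • x) = c • q2 x := rfl
@[simp] theorem q1_mul (x y : Octonion) : q1 (x * y) = q1 x * q1 y - star (q2 y) * q2 x := rfl
@[simp] theorem q2_mul (x y : Octonion) : q2 (x * y) = q2 y * q1 x + q2 x * star (q1 y) := rfl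

protected theorem add_mul (x y z : Octonion) : (x + y) * z = x * z + y * z := by
  refine ext ?_ ?_ <;> simp only [q1_mul, q2_mul, q1_add, q2_add] <;> noncomm_ring

protected theorem mul_add (x y z : Octonion) : x * (y + z) = x * y + x * z := by
  refine ext ?_ ?_ <;> simp only [q1_mul, q2_mul, q1_add, q2_add, star_add] <;> noncomm_ring

theorem coord_e (i : Fin 8) : coord (e i) = Pi.single i 1 := by
  fin_cases i <;> ext k <;> fin_cases k <;> rfl

theorem mul_add_mul_of_re_eq_zero {x y : Octonion} (hx : re x = 0) (hy : re y = 0) :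
    x * y + y * x = (-2 * ∑ k, coord x k * coord y k) • 1 := by
  simp only [re] at hx hy
  refine ext ?_ ?_ <;> ext <;>
    simp [Fin.sum_univ_eight, coord, Quaternion.re_mul, Quaternion.imI_mul, Quaternion.imJ_mul,
      Quaternion.imK_mul, hx, hy] <;> ring

theorem mul_self_of_re_eq_zero {x : Octonion} (hx : re x = 0) :
    x * x = -(∑ k, coord x k ^ 2) • 1 := by
  simp only [re] at hx
  refine ext ?_ ?_ <;> ext <;>
    simp [Fin.sum_univ_eight, coord, Quaternion.re_mul, Quaternion.imI_mul, Quaternion.imJ_mul,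
      Quaternion.imK_mul, hx] <;> ring

theorem re_e_succ (i : Fin 7) : re (e i.succ) = 0 := by
  change coord (e i.succ) 0 = 0
  rw [coord_e]
  exact Pi.single_eq_of_ne (Fin.succ_ne_zero i).symm _

theorem e_succ_mul_self (i : Fin 7) : e i.succ * e i.succ = -1 := by
  rw [mul_self_of_re_eq_zero (re_e_succ i), coord_e]
  simp [Pi.single_apply]

theorem e_succ_mul_add_mul_of_ne {i j : Fin 7} (h : i ≠ j) :
    e i.succ * e j.succ + e j.succ * e i.succ = 0 := by
  rw [mul_add_mul_of_re_eq_zero (re_e_succ i) (re_e_succ j), coord_e, coord_e]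
  simp [Pi.single_apply, h.symm]

theorem sum_coord_smul_e (a : Octonion) : ∑ i, coord a i • e i = a := by
  refine ext ?_ ?_ <;> ext <;> simp [Fin.sum_univ_eight, coord, e] <;> simp [mk', q1, q2]

end Octonion

section OrderedProduct

variable {R M ι : Type*} [CommRing R] [AddCommGroup M] [Module R M] [LinearOrder ι]
  (T : ι → Module.End R M)

def orderedProd (s : Finset ι) : Module.End R M := ((s.sort (· ≤ ·)).map T).prod

@[simp] theorem orderedProd_empty : orderedProd T ∅ = 1 := by
  simp [orderedProd]

@[simp] theorem orderedProd_singleton (a : ι) : orderedProd T {a} = T a := by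
  simp [orderedProd]

theorem orderedProd_insert_of_lt {a : ι} {s : Finset ι} (h : ∀ x ∈ s, a < x) :
    orderedProd T (insert a s) = T a * orderedProd T s := by
  rw [orderedProd, Finset.sort_insert _ (fun b hb => (h b hb).le) (fun ha => (h a ha).false)]
  rfl

theorem mul_orderedProd (c : ι → R) (hsq : ∀ i, T i * T i = c i • 1)
    (hanti : ∀ i j, i ≠ j → T i * T j = -(T j * T i)) (j : ι) (s : Finset ι) :
    ∃ r : R, T j * orderedProd T s = r • orderedProd T (symmDiff s {j}) := by
  classical
  induction s using Finset.induction_on_min with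
  | empty => exact ⟨1, by simp [symmDiff_def]⟩
  | insert a s has ih =>
    rcases lt_trichotomy j a with hja | rfl | haj
    · refine ⟨1, ?_⟩
      have hjs : symmDiff (insert a s) {j} = insert j (insert a s) := by
        ext x; simp only [Finset.mem_symmDiff, Finset.mem_insert, Finset.mem_singleton]; grind
      have hlt : ∀ x ∈ insert a s, j < x := by
        simpa [hja] using fun x hx => hja.trans (has x hx)
      rw [hjs, orderedProd_insert_of_lt T hlt, one_smul]
    · refine ⟨c j, ?_⟩
      have hjs : symmDiff (insert j s) {j} = s := by
        ext x; simp only [Finset.mem_symmDiff, Finset.mem_insert, Finset.mem_singleton]; grind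
      rw [hjs, orderedProd_insert_of_lt T has, ← mul_assoc, hsq, smul_one_mul]
    · obtain ⟨r, hr⟩ := ih
      refine ⟨-r, ?_⟩
      have hjs : symmDiff (insert a s) {j} = insert a (symmDiff s {j}) := by
        ext x; simp only [Finset.mem_symmDiff, Finset.mem_insert, Finset.mem_singleton]; grind
      have hlt : ∀ x ∈ symmDiff s {j}, a < x := by
        intro x hx
        rcases Finset.mem_symmDiff.mp hx with ⟨hx, -⟩ | ⟨hx, -⟩
        exacts [has x hx, Finset.mem_singleton.mp hx ▸ haj]
      rw [hjs, orderedProd_insert_of_lt T has, orderedProd_insert_of_lt T hlt, ← mul_assoc,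
        hanti j a haj.ne', neg_mul, mul_assoc, hr, mul_smul_comm, neg_smul]

def orderedSpan (m : M) : Submodule R M := Submodule.span R (Set.range fun s => orderedProd T s m)

theorem self_mem_orderedSpan (m : M) : m ∈ orderedSpan T m :=
  Submodule.subset_span ⟨∅, by simp⟩

theorem apply_mem_orderedSpan (c : ι → R) (hsq : ∀ i, T i * T i = c i • 1)
    (hanti : ∀ i j, i ≠ j → T i * T j = -(T j * T i)) (j : ι) {m x : M}
    (hx : x ∈ orderedSpan T m) : T j x ∈ orderedSpan T m := by
  suffices orderedSpan T m ≤ (orderedSpan T m).comap (T j) from this hx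
  refine Submodule.span_le.mpr ?_
  rintro - ⟨s, rfl⟩
  obtain ⟨r, hr⟩ := mul_orderedProd T c hsq hanti j s
  rw [SetLike.mem_coe, Submodule.mem_comap, ← Module.End.mul_apply, hr, LinearMap.smul_apply]
  exact Submodule.smul_mem _ r (Submodule.subset_span ⟨_, rfl⟩)

theorem rank_orderedSpan_le [Nontrivial R] [Fintype ι] (m : M) :
    Module.rank R (orderedSpan T m) ≤ 2 ^ Fintype.card ι := by
  classical
  set f := fun s => orderedProd T s m
  have hrange : Set.range f = ↑(Finset.univ.image f) := by simp
  rw [orderedSpan, hrange]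
  calc _ ≤ ((Finset.univ.image f).card : Cardinal) := rank_span_finset_le _
    _ ≤ Fintype.card (Finset ι) := by exact_mod_cast Finset.card_image_le
    _ = 2 ^ Fintype.card ι := by simp [Fintype.card_finset]

end OrderedProduct

namespace Octonion

variable {M : Type*} [AddCommGroup M] [Module ℝ M] (L : Octonion →ₗ[ℝ] M →ₗ[ℝ] M)

theorem map_apply_mem_of_forall_e {S : Submodule ℝ M} {x : M} (h : ∀ i, L (e i) x ∈ S)
    (a : Octonion) : L a x ∈ S := by
  rw [← sum_coord_smul_e a, map_sum, LinearMap.sum_apply]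
  exact Submodule.sum_mem _ fun i _ => by
    rw [map_smul, LinearMap.smul_apply]
    exact Submodule.smul_mem _ _ (h i)

variable {L}

theorem map_mul_add_mul (halt : ∀ (a : Octonion) (m : M), L (a * a) m = L a (L a m))
    (a b : Octonion) : L (a * b + b * a) = L a * L b + L b * L a := by
  ext x
  have hab := halt (a + b) x
  rw [Octonion.add_mul, Octonion.mul_add, Octonion.mul_add] at hab
  simp only [map_add, LinearMap.add_apply, halt] at hab
  simp only [map_add, LinearMap.add_apply, Module.End.mul_apply]
  linear_combination (norm := module) hab

theorem map_e_succ_mul_self (hone : ∀ m : M, L 1 m = m)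
    (halt : ∀ (a : Octonion) (m : M), L (a * a) m = L a (L a m)) (i : Fin 7) :
    L (e i.succ) * L (e i.succ) = (-1 : ℝ) • 1 := by
  ext x
  simp [← halt, e_succ_mul_self, hone]

theorem map_e_succ_mul_anticomm (halt : ∀ (a : Octonion) (m : M), L (a * a) m = L a (L a m))
    {i j : Fin 7} (h : i ≠ j) :
    L (e i.succ) * L (e j.succ) = -(L (e j.succ) * L (e i.succ)) := by
  refine eq_neg_of_add_eq_zero_left ?_
  rw [← map_mul_add_mul halt, e_succ_mul_add_mul_of_ne h, map_zero]

end Octonion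

open Octonion in
/-- In a left `𝕆`-module `M` (with `ℝ`-bilinear action `L`, `L 1 = id`, and the
left alternative law `(a²)m = a(am)`), the submodule generated by a single
element `m` has real dimension at most `128`. -/
theorem octonion_left_module_cyclic_submodule_rank_le
    {M : Type*} [AddCommGroup M] [Module ℝ M]
    (L : Octonion →ₗ[ℝ] M →ₗ[ℝ] M)
    (hone : ∀ m : M, L 1 m = m)
    (halt : ∀ (a : Octonion) (m : M), L (a * a) m = L a (L a m))
    (m : M) :
    Module.rank ℝ
      (sInf {S : Submodule ℝ M |
        m ∈ S ∧ ∀ (a : Octonion) (x : M), x ∈ S → L a x ∈ S} : Submodule ℝ M)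
      ≤ 128 := by
  set T : Fin 7 → Module.End ℝ M := fun i => L (e i.succ)
  have hclosed (a : Octonion) (x : M) (hx : x ∈ orderedSpan T m) : L a x ∈ orderedSpan T m := by
    refine map_apply_mem_of_forall_e L (fun i => ?_) a
    cases i using Fin.cases with
    | zero => rwa [show e 0 = 1 from rfl, hone]
    | succ i =>
      exact apply_mem_orderedSpan T (fun _ => -1) (map_e_succ_mul_self hone halt)
        (fun _ _ => map_e_succ_mul_anticomm halt) i hx
  calc _ ≤ Module.rank ℝ (orderedSpan T m) :=
        Submodule.rank_mono <| sInf_le <| by exact ⟨self_mem_orderedSpan T m, hclosed⟩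
    _ ≤ 2 ^ Fintype.card (Fin 7) := rank_orderedSpan_le T m
    _ = 128 := by norm_num
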